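/- Let (x_n) be a weak Bessel sequence in a self-dual Hilbert C*-module X over a von Neumann algebra A. Then the analysis operator U : X → ℓ²_strong(A), Ux = (⟨x,x_n⟩)_n, is adjointable, and its adjoint satisfies U*((a_n)) = (weak-strong)∑ a_n x_n for all (a_n) ∈ ℓ²_strong(A); in particular U*e^{(n)} = x_n where e^{(n)} is the n-th standard basis sequence. -/

import Mathlib

open Filter Topology

noncomputable section

variable {H : Type*} [NormedAddCommGroup H] [InnerProductSpace ℂ H] [CompleteSpace H]

/-- A (left) self-dual Hilbert C*-module over a von Neumann algebra `A ⊆ B(H)`: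
an `A`-module with an `A`-valued inner product, complete in the induced norm,
such that every bounded module map into `A` is represented by the inner product. -/
structure SelfDualHilbertModule (H : Type*) [NormedAddCommGroup H] [InnerProductSpace ℂ H]
    [CompleteSpace H] (A : VonNeumannAlgebra H) where
  carrier : Type*
  [grp : AddCommGroup carrier]
  smul : (H →L[ℂ] H) → carrier → carrier
  inner : carrier → carrier → (H →L[ℂ] H)
  inner_mem : ∀ x y, inner x y ∈ A
  smul_add' : ∀ a x y, smul a (x + y) = smul a x + smul a y
  add_smul' : ∀ a b x, smul (a + b) x = smul a x + smul b x
  mul_smul' : ∀ a b x, smul (a * b) x = smul a (smul b x)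
  one_smul' : ∀ x, smul 1 x = x
  inner_add_left : ∀ x y z, inner (x + y) z = inner x z + inner y z
  inner_smul_left : ∀ a x y, a ∈ A → inner (smul a x) y = a * inner x y
  inner_conj : ∀ x y, inner y x = star (inner x y)
  inner_self_pos : ∀ x, (inner x x).IsPositive
  inner_self_eq_zero : ∀ x, inner x x = 0 → x = 0
  complete : ∀ u : ℕ → carrier,
    (∀ ε : ℝ, 0 < ε → ∃ K : ℕ, ∀ k l : ℕ, K ≤ k → K ≤ l →
      ‖inner (u k - u l) (u k - u l)‖ < ε) →
    ∃ x : carrier, Tendsto (fun k => ‖inner (u k - x) (u k - x)‖) atTop (𝓝 0)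
  selfdual : ∀ L : carrier → (H →L[ℂ] H),
    (∀ x, L x ∈ A) → (∀ x y, L (x + y) = L x + L y) →
    (∀ a x, a ∈ A → L (smul a x) = a * L x) →
    (∃ C : ℝ, ∀ x, ‖L x‖ ≤ C * Real.sqrt ‖inner x x‖) →
    ∃ t : carrier, ∀ x, L x = inner x t

attribute [instance] SelfDualHilbertModule.grp

/-- Convergence of the series `∑ f n` in the strong operator topology. -/
def SOTSum (f : ℕ → H →L[ℂ] H) (s : H →L[ℂ] H) : Prop :=
  ∀ ξ : H, Tendsto (fun N : ℕ => (∑ n ∈ Finset.range N, f n) ξ) atTop (𝓝 (s ξ))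

/-- The operator order `a ≤ b` on `B(H)`. -/
def opLE (a b : H →L[ℂ] H) : Prop := (b - a).IsPositive

variable {A : VonNeumannAlgebra H}

/-- A weak Bessel sequence in a self-dual Hilbert module over a von Neumann algebra. -/
def IsWeakBessel (M : SelfDualHilbertModule H A) (x : ℕ → M.carrier) : Prop :=
  ∃ B : ℝ, 0 < B ∧ ∀ v : M.carrier, ∃ s : H →L[ℂ] H,
    SOTSum (fun n => M.inner v (x n) * star (M.inner v (x n))) s ∧
    opLE s ((B : ℂ) • M.inner v v)

/-- A weak frame in a self-dual Hilbert module over a von Neumann algebra. -/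
def IsWeakFrame (M : SelfDualHilbertModule H A) (x : ℕ → M.carrier) : Prop :=
  ∃ A₀ B : ℝ, 0 < A₀ ∧ 0 < B ∧ ∀ v : M.carrier, ∃ s : H →L[ℂ] H,
    SOTSum (fun n => M.inner v (x n) * star (M.inner v (x n))) s ∧
    opLE ((A₀ : ℂ) • M.inner v v) s ∧
    opLE s ((B : ℂ) • M.inner v v)

/-- Membership in `ℓ²_strong(A)`. -/
def MemL2Strong (A : VonNeumannAlgebra H) (a : ℕ → H →L[ℂ] H) : Prop :=
  (∀ n, a n ∈ A) ∧ ∃ C : ℝ, ∀ N : ℕ, ‖∑ n ∈ Finset.range N, a n * star (a n)‖ ≤ C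

/-- The `n`-th standard basis vector `e⁽ⁿ⁾` of `ℓ²_strong(A)`. -/
def stdBasis (n : ℕ) : ℕ → H →L[ℂ] H := fun k => if k = n then 1 else 0


section Helpers
open ContinuousLinearMap

lemma sum_norm_star_apply_sq (c : ℕ → H →L[ℂ] H) (F : Finset ℕ) (ξ : H) :
    ∑ n ∈ F, ‖(star (c n)) ξ‖ ^ 2
      = RCLike.re (inner (𝕜 := ℂ) ((∑ n ∈ F, c n * star (c n)) ξ) ξ) := by
  rw [ContinuousLinearMap.sum_apply, sum_inner, map_sum]
  refine Finset.sum_congr rfl fun n _ => ?_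
  rw [ContinuousLinearMap.mul_apply, star_eq_adjoint, ← adjoint_inner_right,
    inner_self_eq_norm_sq]

lemma key_ineq (b c : ℕ → H →L[ℂ] H) (F : Finset ℕ) (ξ : H) :
    ‖(∑ n ∈ F, b n * star (c n)) ξ‖ ≤
      Real.sqrt (∑ n ∈ F, ‖(star (c n)) ξ‖ ^ 2) * Real.sqrt ‖∑ n ∈ F, b n * star (b n)‖ := by
  set S := (∑ n ∈ F, b n * star (c n)) ξ with hS
  rcases eq_or_ne S 0 with h0 | h0
  · rw [h0, norm_zero]; positivity
  have key : ‖S‖ ^ 2 ≤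
      Real.sqrt (∑ n ∈ F, ‖(star (c n)) ξ‖ ^ 2) * Real.sqrt ‖∑ n ∈ F, b n * star (b n)‖ * ‖S‖ := by
    have e1 : ‖S‖ ^ 2 = RCLike.re (inner (𝕜 := ℂ) S S) := (inner_self_eq_norm_sq S).symm
    have e2 : RCLike.re (inner (𝕜 := ℂ) S S)
        = ∑ n ∈ F, RCLike.re (inner (𝕜 := ℂ) ((star (c n)) ξ) ((star (b n)) S)) := by
      nth_rewrite 1 [hS]
      rw [ContinuousLinearMap.sum_apply, sum_inner, map_sum]
      refine Finset.sum_congr rfl fun n _ => ?_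
      rw [ContinuousLinearMap.mul_apply]
      rw [star_eq_adjoint, star_eq_adjoint, ← adjoint_inner_right]
    have e3 : ∀ n ∈ F, RCLike.re (inner (𝕜 := ℂ) ((star (c n)) ξ) ((star (b n)) S))
        ≤ ‖(star (c n)) ξ‖ * ‖(star (b n)) S‖ := by
      intro n _
      calc RCLike.re (inner (𝕜 := ℂ) ((star (c n)) ξ) ((star (b n)) S))
          ≤ ‖(inner (𝕜 := ℂ) ((star (c n)) ξ) ((star (b n)) S) : ℂ)‖ := RCLike.re_le_norm _
        _ ≤ _ := norm_inner_le_norm _ _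
    have e4 : ∑ n ∈ F, ‖(star (c n)) ξ‖ * ‖(star (b n)) S‖
        ≤ Real.sqrt (∑ n ∈ F, ‖(star (c n)) ξ‖ ^ 2) *
          Real.sqrt (∑ n ∈ F, ‖(star (b n)) S‖ ^ 2) := by
      rw [← Real.sqrt_mul (by positivity)]
      refine (Real.le_sqrt (by positivity)
        (mul_nonneg (Finset.sum_nonneg fun n _ => by positivity)
          (Finset.sum_nonneg fun n _ => by positivity))).mpr ?_
      exact Finset.sum_mul_sq_le_sq_mul_sq F _ _
    have e5 : ∑ n ∈ F, ‖(star (b n)) S‖ ^ 2 ≤ ‖∑ n ∈ F, b n * star (b n)‖ * ‖S‖ ^ 2 := by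
      rw [sum_norm_star_apply_sq]
      calc RCLike.re (inner (𝕜 := ℂ) ((∑ n ∈ F, b n * star (b n)) S) S)
          ≤ ‖(inner (𝕜 := ℂ) ((∑ n ∈ F, b n * star (b n)) S) S : ℂ)‖ := RCLike.re_le_norm _
        _ ≤ ‖(∑ n ∈ F, b n * star (b n)) S‖ * ‖S‖ := norm_inner_le_norm _ _
        _ ≤ (‖∑ n ∈ F, b n * star (b n)‖ * ‖S‖) * ‖S‖ := by
            gcongr; exact le_opNorm _ _
        _ = _ := by ring
    calc ‖S‖ ^ 2 = RCLike.re (inner (𝕜 := ℂ) S S) := e1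
      _ ≤ ∑ n ∈ F, ‖(star (c n)) ξ‖ * ‖(star (b n)) S‖ := e2 ▸ Finset.sum_le_sum e3
      _ ≤ Real.sqrt (∑ n ∈ F, ‖(star (c n)) ξ‖ ^ 2) *
          Real.sqrt (∑ n ∈ F, ‖(star (b n)) S‖ ^ 2) := e4
      _ ≤ Real.sqrt (∑ n ∈ F, ‖(star (c n)) ξ‖ ^ 2) *
          Real.sqrt (‖∑ n ∈ F, b n * star (b n)‖ * ‖S‖ ^ 2) :=
            mul_le_mul_of_nonneg_left (Real.sqrt_le_sqrt e5) (by positivity)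
      _ = _ := by
          rw [Real.sqrt_mul (norm_nonneg _), Real.sqrt_sq (norm_nonneg _), mul_assoc]
  have hSpos : 0 < ‖S‖ := norm_pos_iff.mpr h0
  rw [pow_two] at key
  exact le_of_mul_le_mul_right key hSpos

lemma finset_bb_bound (b : ℕ → H →L[ℂ] H) (D : ℝ)
    (hb : ∀ N, ‖∑ n ∈ Finset.range N, b n * star (b n)‖ ≤ D) (F : Finset ℕ) :
    ‖∑ n ∈ F, b n * star (b n)‖ ≤ D := by
  obtain ⟨N, hN⟩ : ∃ N, F ⊆ Finset.range N := by
    rcases F.bddAbove with ⟨m, hm⟩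
    exact ⟨m + 1, fun k hk => Finset.mem_range.mpr (Nat.lt_succ_of_le (hm hk))⟩
  refine le_trans (CStarAlgebra.norm_le_norm_of_nonneg_of_le
    (Finset.sum_nonneg fun n _ => mul_star_self_nonneg _) ?_) (hb N)
  exact Finset.sum_le_sum_of_subset_of_nonneg hN fun n _ _ => mul_star_self_nonneg _

lemma tsq_bound (c : ℕ → H →L[ℂ] H) (C : ℝ)
    (hc : ∀ N, ‖∑ n ∈ Finset.range N, c n * star (c n)‖ ≤ C) (ξ : H) (N : ℕ) :
    ∑ n ∈ Finset.range N, ‖(star (c n)) ξ‖ ^ 2 ≤ C * ‖ξ‖ ^ 2 := by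
  rw [sum_norm_star_apply_sq]
  calc RCLike.re (inner (𝕜 := ℂ) ((∑ n ∈ Finset.range N, c n * star (c n)) ξ) ξ)
      ≤ ‖(inner (𝕜 := ℂ) ((∑ n ∈ Finset.range N, c n * star (c n)) ξ) ξ : ℂ)‖ :=
        RCLike.re_le_norm _
    _ ≤ ‖(∑ n ∈ Finset.range N, c n * star (c n)) ξ‖ * ‖ξ‖ := norm_inner_le_norm _ _
    _ ≤ (‖∑ n ∈ Finset.range N, c n * star (c n)‖ * ‖ξ‖) * ‖ξ‖ := by
        gcongr; exact le_opNorm _ _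
    _ ≤ C * ‖ξ‖ ^ 2 := by rw [mul_assoc, ← pow_two]; gcongr; exact hc N

lemma tsq_cauchy (c : ℕ → H →L[ℂ] H) (C : ℝ)
    (hc : ∀ N, ‖∑ n ∈ Finset.range N, c n * star (c n)‖ ≤ C) (ξ : H) :
    CauchySeq (fun N => ∑ n ∈ Finset.range N, ‖(star (c n)) ξ‖ ^ 2) := by
  have hmono : Monotone (fun N => ∑ n ∈ Finset.range N, ‖(star (c n)) ξ‖ ^ 2) := by
    intro m n hmn
    exact Finset.sum_le_sum_of_subset_of_nonneg (Finset.range_subset_range.mpr hmn)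
      (fun k _ _ => by positivity)
  exact (tendsto_atTop_ciSup hmono
    ⟨C * ‖ξ‖ ^ 2, Set.forall_mem_range.mpr (tsq_bound c C hc ξ)⟩).cauchySeq

lemma sot_exists (b c : ℕ → H →L[ℂ] H) (D C : ℝ)
    (hb : ∀ N, ‖∑ n ∈ Finset.range N, b n * star (b n)‖ ≤ D)
    (hc : ∀ N, ‖∑ n ∈ Finset.range N, c n * star (c n)‖ ≤ C) :
    ∃ s : H →L[ℂ] H, SOTSum (fun n => b n * star (c n)) s ∧
      ∀ ξ : H, ‖s ξ‖ ≤ Real.sqrt C * Real.sqrt D * ‖ξ‖ := by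
  have hD0 : 0 ≤ D := le_trans (by simp) (hb 0)
  have hC0 : 0 ≤ C := le_trans (by simp) (hc 0)
  set P : ℕ → H →L[ℂ] H := fun N => ∑ n ∈ Finset.range N, b n * star (c n) with hP
  have hcauchy : ∀ ξ : H, CauchySeq (fun N => P N ξ) := by
    intro ξ
    set t : ℕ → ℝ := fun N => ∑ n ∈ Finset.range N, ‖(star (c n)) ξ‖ ^ 2 with ht
    have htc : CauchySeq t := tsq_cauchy c C hc ξ
    rw [Metric.cauchySeq_iff] at htc ⊢
    intro ε hε
    have hε' : 0 < (ε / (Real.sqrt D + 1)) ^ 2 := by positivity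
    obtain ⟨K, hK⟩ := htc _ hε'
    refine ⟨K, fun m hm n hn => ?_⟩
    wlog hnm : n ≤ m generalizing m n
    · rw [dist_comm]; exact this n hn m hm (le_of_not_ge hnm)
    have hdiff : P m ξ - P n ξ = (∑ k ∈ Finset.Ico n m, b k * star (c k)) ξ := by
      rw [← ContinuousLinearMap.sub_apply]
      congr 1
      rw [hP]
      simp only []
      rw [← Finset.sum_Ico_eq_sub _ hnm]
    have htail : ∑ k ∈ Finset.Ico n m, ‖(star (c k)) ξ‖ ^ 2 = t m - t n := by
      rw [ht]
      simp only []
      rw [Finset.sum_Ico_eq_sub _ hnm]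
    have hdist := hK m hm n hn
    rw [Real.dist_eq] at hdist
    have h2 : Real.sqrt (t m - t n) < ε / (Real.sqrt D + 1) := by
      calc Real.sqrt (t m - t n) ≤ Real.sqrt |t m - t n| := Real.sqrt_le_sqrt (le_abs_self _)
        _ < Real.sqrt ((ε / (Real.sqrt D + 1)) ^ 2) := Real.sqrt_lt_sqrt (abs_nonneg _) hdist
        _ = ε / (Real.sqrt D + 1) := Real.sqrt_sq (by positivity)
    calc dist (P m ξ) (P n ξ) = ‖P m ξ - P n ξ‖ := dist_eq_norm _ _
      _ = ‖(∑ k ∈ Finset.Ico n m, b k * star (c k)) ξ‖ := by rw [hdiff]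
      _ ≤ Real.sqrt (∑ k ∈ Finset.Ico n m, ‖(star (c k)) ξ‖ ^ 2) *
          Real.sqrt ‖∑ k ∈ Finset.Ico n m, b k * star (b k)‖ := key_ineq b c _ ξ
      _ ≤ Real.sqrt (t m - t n) * Real.sqrt D := by
          rw [htail]
          gcongr
          exact finset_bb_bound b D hb _
      _ ≤ Real.sqrt (t m - t n) * (Real.sqrt D + 1) :=
          mul_le_mul_of_nonneg_left (by linarith) (Real.sqrt_nonneg _)
      _ < (ε / (Real.sqrt D + 1)) * (Real.sqrt D + 1) := by
          apply mul_lt_mul_of_pos_right h2 (by positivity)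
      _ = ε := div_mul_cancel₀ _ (by positivity)
  have hlim : ∀ ξ : H, ∃ y : H, Tendsto (fun N => P N ξ) atTop (𝓝 y) :=
    fun ξ => cauchySeq_tendsto_of_complete (hcauchy ξ)
  set f : H → H := fun ξ => Classical.choose (hlim ξ) with hf
  have hten : Tendsto (fun N ξ => P N ξ) atTop (𝓝 f) :=
    tendsto_pi_nhds.mpr fun ξ => Classical.choose_spec (hlim ξ)
  refine ⟨continuousLinearMapOfTendsto P hten, fun ξ => ?_, fun ξ => ?_⟩
  · exact Classical.choose_spec (hlim ξ)
  · have hbd : ∀ N, ‖P N ξ‖ ≤ Real.sqrt C * Real.sqrt D * ‖ξ‖ := by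
      intro N
      calc ‖P N ξ‖ ≤ Real.sqrt (∑ n ∈ Finset.range N, ‖(star (c n)) ξ‖ ^ 2) *
            Real.sqrt ‖∑ n ∈ Finset.range N, b n * star (b n)‖ := key_ineq b c _ ξ
        _ ≤ Real.sqrt (C * ‖ξ‖ ^ 2) * Real.sqrt D := by
            gcongr
            · exact tsq_bound c C hc ξ N
            · exact hb N
        _ = Real.sqrt C * Real.sqrt D * ‖ξ‖ := by
            rw [Real.sqrt_mul hC0, Real.sqrt_sq (norm_nonneg _)]; ring
    exact le_of_tendsto ((Classical.choose_spec (hlim ξ)).norm) (Eventually.of_forall hbd)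

lemma sot_unique {f : ℕ → H →L[ℂ] H} {s s' : H →L[ℂ] H}
    (h : SOTSum f s) (h' : SOTSum f s') : s = s' :=
  ContinuousLinearMap.ext fun ξ => tendsto_nhds_unique (h ξ) (h' ξ)

lemma isPositive_of_tendsto {T : ℕ → H →L[ℂ] H} {S : H →L[ℂ] H}
    (h : ∀ ξ, Tendsto (fun K => T K ξ) atTop (𝓝 (S ξ)))
    (hp : ∀ᶠ K in atTop, (T K).IsPositive) : S.IsPositive := by
  constructor
  · intro ξ η
    have h1 : Tendsto (fun K => (inner (𝕜 := ℂ) (T K ξ) η : ℂ)) atTop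
        (𝓝 (inner (𝕜 := ℂ) (S ξ) η)) := (h ξ).inner tendsto_const_nhds
    have h2 : Tendsto (fun K => (inner (𝕜 := ℂ) ξ (T K η) : ℂ)) atTop
        (𝓝 (inner (𝕜 := ℂ) ξ (S η))) := tendsto_const_nhds.inner (h η)
    refine tendsto_nhds_unique (h1.congr' ?_) h2
    filter_upwards [hp] with K hK
    exact hK.isSelfAdjoint.isSymmetric ξ η
  · intro ξ
    have h1 : Tendsto (fun K => RCLike.re (inner (𝕜 := ℂ) (T K ξ) ξ : ℂ)) atTop
        (𝓝 (RCLike.re (inner (𝕜 := ℂ) (S ξ) ξ : ℂ))) :=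
      (RCLike.continuous_re.tendsto _).comp ((h ξ).inner tendsto_const_nhds)
    refine ge_of_tendsto h1 ?_
    filter_upwards [hp] with K hK
    exact (RCLike.nonneg_iff.mp (hK.inner_nonneg_left ξ)).1

lemma mem_vna_of_sot {A : VonNeumannAlgebra H} {f : ℕ → H →L[ℂ] H} {s : H →L[ℂ] H}
    (h : SOTSum f s) (hf : ∀ n, f n ∈ A) : s ∈ A := by
  have hA : s ∈ Set.centralizer (Set.centralizer (A : Set (H →L[ℂ] H))) := by
    rw [Set.mem_centralizer_iff]
    intro z hz
    ext ξ
    have hPz : ∀ N, (∑ n ∈ Finset.range N, f n) * z = z * (∑ n ∈ Finset.range N, f n) := by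
      intro N
      exact hz _ (sum_mem (fun n _ => hf n))
    have h1 : Tendsto (fun N => z ((∑ n ∈ Finset.range N, f n) ξ)) atTop (𝓝 (z (s ξ))) :=
      (z.continuous.tendsto _).comp (h ξ)
    have h2 : Tendsto (fun N => z ((∑ n ∈ Finset.range N, f n) ξ)) atTop (𝓝 (s (z ξ))) := by
      have := h (z ξ)
      refine this.congr fun N => ?_
      have h4 := congrArg (fun T => T (ξ)) (hPz N)
      simpa [ContinuousLinearMap.mul_apply] using h4
    exact tendsto_nhds_unique h1 h2
  rw [← SetLike.mem_coe, ← A.centralizer_centralizer]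
  exact hA

-- adjoint: if SOTSum f s and SOTSum (star ∘ f) r then r = star s
lemma sot_star {f : ℕ → H →L[ℂ] H} {s r : H →L[ℂ] H}
    (h : SOTSum f s) (h' : SOTSum (fun n => star (f n)) r) : r = star s := by
  ext ξ
  refine ext_inner_right ℂ fun η => ?_
  have h1 : Tendsto (fun N => (inner (𝕜 := ℂ) ((∑ n ∈ Finset.range N, star (f n)) ξ) η : ℂ))
      atTop (𝓝 (inner (𝕜 := ℂ) (r ξ) η)) := (h' ξ).inner tendsto_const_nhds
  have h2 : Tendsto (fun N => (inner (𝕜 := ℂ) ξ ((∑ n ∈ Finset.range N, f n) η) : ℂ))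
      atTop (𝓝 (inner (𝕜 := ℂ) ξ (s η))) := tendsto_const_nhds.inner (h η)
  have heq : ∀ N, (inner (𝕜 := ℂ) ((∑ n ∈ Finset.range N, star (f n)) ξ) η : ℂ)
      = inner (𝕜 := ℂ) ξ ((∑ n ∈ Finset.range N, f n) η) := by
    intro N
    rw [← star_sum, star_eq_adjoint, adjoint_inner_left]
  have h3 : (inner (𝕜 := ℂ) (r ξ) η : ℂ) = inner (𝕜 := ℂ) ξ (s η) :=
    tendsto_nhds_unique (h1.congr heq) h2
  rw [h3, ← adjoint_inner_left, ← star_eq_adjoint]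

lemma bessel_bound (M : SelfDualHilbertModule H A) (x : ℕ → M.carrier) (B : ℝ)
    (hBes : ∀ v : M.carrier, ∃ s : H →L[ℂ] H,
      SOTSum (fun n => M.inner v (x n) * star (M.inner v (x n))) s ∧
      opLE s ((B : ℂ) • M.inner v v)) (v : M.carrier) (N : ℕ) :
    ‖∑ n ∈ Finset.range N, M.inner v (x n) * star (M.inner v (x n))‖
      ≤ ‖(B : ℂ) • M.inner v v‖ := by
  obtain ⟨s, hs, hle⟩ := hBes v
  set f : ℕ → H →L[ℂ] H := fun n => M.inner v (x n) * star (M.inner v (x n)) with hf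
  have hPpos : (0 : H →L[ℂ] H) ≤ ∑ n ∈ Finset.range N, f n :=
    Finset.sum_nonneg fun n _ => mul_star_self_nonneg _
  have hPle : ∑ n ∈ Finset.range N, f n ≤ s := by
    rw [ContinuousLinearMap.le_def]
    refine isPositive_of_tendsto (T := fun K =>
      (∑ n ∈ Finset.range K, f n) - ∑ n ∈ Finset.range N, f n) ?_ ?_
    · intro ξ
      have := (hs ξ).sub (tendsto_const_nhds (x := (∑ n ∈ Finset.range N, f n) ξ))
      exact this.congr fun K => by simp [ContinuousLinearMap.sub_apply]
    · filter_upwards [eventually_ge_atTop N] with K hK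
      rw [← ContinuousLinearMap.nonneg_iff_isPositive, ← Finset.sum_Ico_eq_sub _ hK]
      exact Finset.sum_nonneg fun n _ => mul_star_self_nonneg _
  have hsle : s ≤ (B : ℂ) • M.inner v v := (ContinuousLinearMap.le_def _ _).mpr hle
  exact CStarAlgebra.norm_le_norm_of_nonneg_of_le hPpos (hPle.trans hsle)

lemma master {A : VonNeumannAlgebra H} (M : SelfDualHilbertModule H A) (x : ℕ → M.carrier)
    (B : ℝ) (hB : 0 < B)
    (hBes : ∀ v : M.carrier, ∃ s : H →L[ℂ] H,
      SOTSum (fun n => M.inner v (x n) * star (M.inner v (x n))) s ∧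
      opLE s ((B : ℂ) • M.inner v v))
    (a : ℕ → H →L[ℂ] H) (ha : MemL2Strong A a) :
    ∃ t : M.carrier, ∀ v : M.carrier,
      SOTSum (fun n => M.inner v (x n) * star (a n)) (M.inner v t) := by
  obtain ⟨haA, C, hC⟩ := ha
  have hC0 : 0 ≤ C := le_trans (by simp) (hC 0)
  have hEx : ∀ v : M.carrier, ∃ s : H →L[ℂ] H,
      SOTSum (fun n => M.inner v (x n) * star (a n)) s ∧
      ∀ ξ : H, ‖s ξ‖ ≤ Real.sqrt C * Real.sqrt ‖(B : ℂ) • M.inner v v‖ * ‖ξ‖ :=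
    fun v => sot_exists (fun n => M.inner v (x n)) a _ C (bessel_bound M x B hBes v) hC
  set L : M.carrier → (H →L[ℂ] H) := fun v => Classical.choose (hEx v) with hLdef
  have hL : ∀ v, SOTSum (fun n => M.inner v (x n) * star (a n)) (L v) :=
    fun v => (Classical.choose_spec (hEx v)).1
  have hLb : ∀ v ξ, ‖L v ξ‖ ≤ Real.sqrt C * Real.sqrt ‖(B : ℂ) • M.inner v v‖ * ‖ξ‖ :=
    fun v => (Classical.choose_spec (hEx v)).2
  have hmem : ∀ v, L v ∈ A := fun v =>
    mem_vna_of_sot (hL v) fun n => mul_mem (M.inner_mem _ _) (star_mem (haA n))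
  have hadd : ∀ v w, L (v + w) = L v + L w := by
    intro v w
    refine (sot_unique (hL (v + w)) ?_)
    intro ξ
    have h12 := ((hL v) ξ).add ((hL w) ξ)
    rw [ContinuousLinearMap.add_apply]
    refine h12.congr fun N => ?_
    simp [ContinuousLinearMap.sum_apply, ContinuousLinearMap.add_apply,
      M.inner_add_left, add_mul, Finset.sum_add_distrib]
  have hsmul : ∀ e v, e ∈ A → L (M.smul e v) = e * L v := by
    intro e v he
    refine (sot_unique (hL (M.smul e v)) ?_)
    intro ξ
    have h1 : Tendsto (fun N => e ((∑ n ∈ Finset.range N,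
        M.inner v (x n) * star (a n)) ξ)) atTop (𝓝 (e (L v ξ))) :=
      (e.continuous.tendsto _).comp ((hL v) ξ)
    rw [show (e * L v) ξ = e (L v ξ) from rfl]
    refine h1.congr fun N => ?_
    simp only [← ContinuousLinearMap.mul_apply, Finset.mul_sum]
    congr 1
    refine Finset.sum_congr rfl fun n _ => ?_
    rw [M.inner_smul_left e v (x n) he, mul_assoc]
  have hbound : ∃ C' : ℝ, ∀ v, ‖L v‖ ≤ C' * Real.sqrt ‖M.inner v v‖ := by
    refine ⟨Real.sqrt C * Real.sqrt B, fun v => ContinuousLinearMap.opNorm_le_bound _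
      (by positivity) fun ξ => ?_⟩
    have h1 := hLb v ξ
    have h2 : ‖(B : ℂ) • M.inner v v‖ = B * ‖M.inner v v‖ := by
      rw [norm_smul, Complex.norm_real, Real.norm_eq_abs, abs_of_pos hB]
    rw [h2, Real.sqrt_mul hB.le] at h1
    calc ‖L v ξ‖ ≤ Real.sqrt C * (Real.sqrt B * Real.sqrt ‖M.inner v v‖) * ‖ξ‖ := h1
      _ = Real.sqrt C * Real.sqrt B * Real.sqrt ‖M.inner v v‖ * ‖ξ‖ := by ring
  obtain ⟨t, ht⟩ := M.selfdual L hmem hadd hsmul hbound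
  exact ⟨t, fun v => (ht v) ▸ hL v⟩

end Helpers

/-- the analysis operator `U : X → ℓ²_strong(A)`, `Ux = (⟨x,xₙ⟩)ₙ`, of a weak
Bessel sequence is adjointable; its adjoint `U*` satisfies
`U*((aₙ)) = (weak-strong)∑ aₙxₙ`, and `U*e⁽ⁿ⁾ = xₙ`. -/
theorem stmt_10 (M : SelfDualHilbertModule H A) (x : ℕ → M.carrier)
    (hx : IsWeakBessel M x) :
    -- the analysis operator takes values in `ℓ²_strong(A)` …
    (∀ v : M.carrier, MemL2Strong A (fun n => M.inner v (x n))) ∧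
    -- … and it has an adjoint `U'`
    ∃ U' : (ℕ → H →L[ℂ] H) → M.carrier,
      -- adjointness: `⟨Uv, a⟩ = ⟨v, U'a⟩` for all `a ∈ ℓ²_strong(A)`
      (∀ v : M.carrier, ∀ a : ℕ → H →L[ℂ] H, MemL2Strong A a →
        SOTSum (fun n => M.inner v (x n) * star (a n)) (M.inner v (U' a))) ∧
      -- `U'((aₙ))` is the weak-strong sum `∑ aₙxₙ`
      (∀ a : ℕ → H →L[ℂ] H, MemL2Strong A a → ∀ y : M.carrier,
        SOTSum (fun n => a n * M.inner (x n) y) (M.inner (U' a) y)) ∧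
      -- `U' e⁽ⁿ⁾ = xₙ`
      (∀ n : ℕ, U' (stdBasis n) = x n) := by
  classical
  obtain ⟨B, hB, hBes⟩ := hx
  have part1 : ∀ v : M.carrier, MemL2Strong A (fun n => M.inner v (x n)) := fun v =>
    ⟨fun n => M.inner_mem _ _, ‖(B : ℂ) • M.inner v v‖, bessel_bound M x B hBes v⟩
  set U' : (ℕ → H →L[ℂ] H) → M.carrier := fun a =>
    if h : MemL2Strong A a then Classical.choose (master M x B hB hBes a h) else 0 with hU'
  have b1 : ∀ v : M.carrier, ∀ a : ℕ → H →L[ℂ] H, MemL2Strong A a →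
      SOTSum (fun n => M.inner v (x n) * star (a n)) (M.inner v (U' a)) := by
    intro v a ha
    have : U' a = Classical.choose (master M x B hB hBes a ha) := by
      rw [hU']; exact dif_pos ha
    rw [this]
    exact Classical.choose_spec (master M x B hB hBes a ha) v
  have b2 : ∀ a : ℕ → H →L[ℂ] H, MemL2Strong A a → ∀ y : M.carrier,
      SOTSum (fun n => a n * M.inner (x n) y) (M.inner (U' a) y) := by
    intro a ha y
    obtain ⟨haA, C, hC⟩ := ha
    have h1 : SOTSum (fun n => M.inner y (x n) * star (a n)) (M.inner y (U' a)) :=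
      b1 y a ⟨haA, C, hC⟩
    obtain ⟨r, hr, -⟩ := sot_exists a (fun n => M.inner y (x n))
      C ‖(B : ℂ) • M.inner y y‖ hC (bessel_bound M x B hBes y)
    have hr' : SOTSum (fun n => star (M.inner y (x n) * star (a n))) r := by
      intro ξ
      refine (hr ξ).congr fun N => ?_
      congr 1
      exact Finset.sum_congr rfl fun k _ => by simp [star_mul, star_star]
    have hre : r = star (M.inner y (U' a)) := sot_star h1 hr'
    have hre' : r = M.inner (U' a) y := by rw [hre, ← M.inner_conj]
    intro ξ
    have h3 := hr' ξ
    rw [hre'] at h3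
    refine h3.congr fun N => ?_
    congr 1
    refine Finset.sum_congr rfl fun k _ => ?_
    simp only [star_mul, star_star]
    rw [M.inner_conj y (x k)]
  have b3 : ∀ n : ℕ, U' (stdBasis n) = x n := by
    intro n
    have hstd : MemL2Strong A (stdBasis n) := by
      constructor
      · intro k
        by_cases h : k = n
        · simp [stdBasis, h, one_mem]
        · simp [stdBasis, h, zero_mem]
      · refine ⟨1, fun N => ?_⟩
        have : ∑ k ∈ Finset.range N, stdBasis n k * star (stdBasis n k)
            = if n ∈ Finset.range N then (1 : H →L[ℂ] H) else 0 := by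
          rw [← Finset.sum_ite_eq' (Finset.range N) n (fun _ => (1 : H →L[ℂ] H))]
          refine Finset.sum_congr rfl fun k _ => ?_
          by_cases h : k = n <;> simp [stdBasis, h]
        rw [this]
        split
        · exact ContinuousLinearMap.norm_id_le
        · simp
    have hinner : ∀ y : M.carrier, M.inner (U' (stdBasis n)) y = M.inner (x n) y := by
      intro y
      have hsum := b2 (stdBasis n) hstd y
      refine ContinuousLinearMap.ext fun ξ => ?_
      have heval : ∀ N : ℕ, n + 1 ≤ N → (∑ k ∈ Finset.range N,
          stdBasis n k * M.inner (x k) y) = M.inner (x n) y := by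
        intro N hN
        have : ∑ k ∈ Finset.range N, stdBasis n k * M.inner (x k) y
            = if n ∈ Finset.range N then M.inner (x n) y else 0 := by
          rw [← Finset.sum_ite_eq' (Finset.range N) n (fun k => M.inner (x k) y)]
          refine Finset.sum_congr rfl fun k _ => ?_
          by_cases h : k = n <;> simp [stdBasis, h]
        rw [this, if_pos (Finset.mem_range.mpr hN)]
      have h2 : Tendsto (fun N : ℕ => ((∑ k ∈ Finset.range N,
          stdBasis n k * M.inner (x k) y : H →L[ℂ] H)) ξ) atTop
          (𝓝 ((M.inner (x n) y) ξ)) := by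
        refine Tendsto.congr' ?_ tendsto_const_nhds
        filter_upwards [eventually_ge_atTop (n + 1)] with N hN
        rw [heval N hN]
      exact tendsto_nhds_unique (hsum ξ) h2
    have hsub : ∀ u w z : M.carrier, M.inner (u - w) z = M.inner u z - M.inner w z := by
      intro u w z
      have h := M.inner_add_left (u - w) w z
      rw [sub_add_cancel] at h
      exact eq_sub_of_add_eq h.symm
    have hz : M.inner (U' (stdBasis n) - x n) (U' (stdBasis n) - x n) = 0 := by
      rw [hsub, hinner, sub_self]
    have := M.inner_self_eq_zero _ hz
    exact sub_eq_zero.mp this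
  exact ⟨part1, U', b1, b2, b3⟩
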